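/- arXiv:2006.09626 — 3 statements merged into one kernel-verified Lean document; each statement's English description precedes it below -/
import Mathlib

section
/- Let J be the 2k×2k integer matrix [[H_k, 2E],[2E − H_k, −2E]], where H_k is the k×k matrix with (l,j) entry 2 for l ≤ j and 0 otherwise, and E the identity. Let J' be the (2k−1)×(2k−1) matrix obtained from J by deleting its 2k-th row and 2k-th column. Then det J' = (−1)^{k−1} · 2^{2k−1}. -/
/-!
Adding row `i + k` to row `i` of `J'`, for every `i` with `i + k < 2k - 1`, is a unimodular row
operation. For `i < k - 1` it turns row `i` into `2 eᵢ`, because `H_k + (2E - H_k) = 2E` and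
`2E + (-2E) = 0`; row `k - 1` has no partner but is already `2 e_{k-1}` once the last column is
deleted. The lower rows are untouched and vanish right of the diagonal, so the result is lower
triangular with `k` diagonal entries `2` followed by `k - 1` entries `-2`.
-/

/-- `H_k` is the `k × k` integer matrix with `(l,j)` entry `2` if `l ≤ j` and `0` otherwise. -/
def Hmat (k : ℕ) : Matrix (Fin k) (Fin k) ℤ :=
  Matrix.of fun l j => if l ≤ j then 2 else 0

/-- The block matrix `J = [[H_k, 2E], [2E - H_k, -2E]]`, reindexed by `Fin (k + k)`. -/
def Jmat (k : ℕ) : Matrix (Fin (k + k)) (Fin (k + k)) ℤ :=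
  (Matrix.fromBlocks (Hmat k) (2 : Matrix (Fin k) (Fin k) ℤ)
      ((2 : Matrix (Fin k) (Fin k) ℤ) - Hmat k)
      (-(2 : Matrix (Fin k) (Fin k) ℤ))).submatrix
    finSumFinEquiv.symm finSumFinEquiv.symm

namespace Matrix

def addShiftedRows (R : Type*) [Zero R] [One R] [Add R] (n s : ℕ) : Matrix (Fin n) (Fin n) R :=
  of fun i j => (if i = j then 1 else 0) + if (j : ℕ) = i + s then 1 else 0

theorem addShiftedRows_mul_apply {R m : Type*} [Fintype m] [NonAssocSemiring R] {n : ℕ} (s : ℕ)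
    (A : Matrix (Fin n) m R) (i : Fin n) (j : m) :
    (addShiftedRows R n s * A) i j = A i j + if h : (i : ℕ) + s < n then A ⟨i + s, h⟩ j else 0 := by
  simp only [mul_apply, addShiftedRows, of_apply, add_mul, ite_mul, one_mul, zero_mul,
    Finset.sum_add_distrib, Finset.sum_ite_eq, Finset.mem_univ, if_true]
  congr 1
  split_ifs with h
  · have hcol (l : Fin n) : (l : ℕ) = i + s ↔ l = ⟨i + s, h⟩ := by rw [Fin.ext_iff]
    simp only [hcol, Finset.sum_ite_eq', Finset.mem_univ, if_true]
  · exact Finset.sum_eq_zero fun l _ => if_neg (by omega)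

theorem det_addShiftedRows {R : Type*} [CommRing R] {n s : ℕ} (hs : 0 < s) :
    (addShiftedRows R n s).det = 1 := by
  have hupper : (addShiftedRows R n s).IsUpperTriangular := by
    intro i j (hji : (j : ℕ) < i)
    simp only [addShiftedRows, of_apply, Fin.ext_iff]
    rw [if_neg (by omega), if_neg (by omega), add_zero]
  rw [det_of_isUpperTriangular hupper]
  refine Finset.prod_eq_one fun i _ => ?_
  simp only [addShiftedRows, of_apply, if_true]
  rw [if_neg (by omega), add_zero]

end Matrix

open Matrix

/-- Indexed by natural numbers, so that the case analyses below are linear arithmetic. -/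
def jmatEntry (k a b : ℕ) : ℤ :=
  if a < k then
    if b < k then (if a ≤ b then 2 else 0) else (if b = a + k then 2 else 0)
  else
    if b < k then (if a - k = b then 2 else 0) - (if a - k ≤ b then 2 else 0)
    else (if a = b then -2 else 0)

theorem Jmat_apply (k : ℕ) (i j : Fin (k + k)) : Jmat k i j = jmatEntry k i j := by
  have hsplit (l : Fin (k + k)) : finSumFinEquiv.symm l =
      if h : (l : ℕ) < k then Sum.inl ⟨l, h⟩ else Sum.inr ⟨l - k, by omega⟩ := by
    rw [Equiv.symm_apply_eq]
    split_ifs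
    · ext; simp only [finSumFinEquiv_apply_left, Fin.val_castAdd]
    · ext; simp only [finSumFinEquiv_apply_right, Fin.val_natAdd]; omega
  simp only [Jmat, submatrix_apply, hsplit, jmatEntry]
  by_cases hi : (i : ℕ) < k <;> by_cases hj : (j : ℕ) < k <;>
    simp [hi, hj, Hmat, fromBlocks, ofNat_apply, Fin.ext_iff] <;> omega

theorem jmatEntry_add_shift_of_lt {k a b : ℕ} (hab : a < b) (hb : b < 2 * k - 1) :
    jmatEntry k a b + (if a + k < 2 * k - 1 then jmatEntry k (a + k) b else 0) = 0 := by
  unfold jmatEntry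
  split_ifs <;> omega

theorem jmatEntry_add_shift_self (k a : ℕ) :
    jmatEntry k a a + (if a + k < 2 * k - 1 then jmatEntry k (a + k) a else 0) =
      if a < k then 2 else -2 := by
  unfold jmatEntry
  split_ifs <;> omega

theorem prod_ite_lt_two_neg_two (k : ℕ) :
    ∏ i : Fin (2 * k - 1), (if (i : ℕ) < k then (2 : ℤ) else -2) =
      (-1) ^ (k - 1) * 2 ^ (2 * k - 1) := by
  rw [Fin.prod_univ_eq_prod_range (fun a => if a < k then (2 : ℤ) else -2)]
  have hlen : 2 * k - 1 = k + (k - 1) := by omega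
  rw [hlen, Finset.prod_range_add, pow_add,
    Finset.prod_congr rfl fun x hx => if_pos (Finset.mem_range.mp hx),
    Finset.prod_congr rfl fun x _ => if_neg (by omega)]
  simp only [Finset.prod_const, Finset.card_range, neg_pow (2 : ℤ)]
  ring

/-- The matrix obtained from `J` by deleting its `2k`-th (i.e. last) row and column
has determinant `(-1)^(k-1) · 2^(2k-1)`. -/
theorem block_matrix_det_minor (k : ℕ) (hk : 1 ≤ k) :
    ((Jmat k).submatrix
        (Fin.castLE (by omega) : Fin (2 * k - 1) → Fin (k + k))
        (Fin.castLE (by omega) : Fin (2 * k - 1) → Fin (k + k))).det =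
      (-1) ^ (k - 1) * 2 ^ (2 * k - 1) := by
  set J' := (Jmat k).submatrix (Fin.castLE (by omega) : Fin (2 * k - 1) → Fin (k + k))
    (Fin.castLE (by omega) : Fin (2 * k - 1) → Fin (k + k))
  set M := addShiftedRows ℤ (2 * k - 1) k * J'
  have hM (i j : Fin (2 * k - 1)) : M i j =
      jmatEntry k i j + if (i : ℕ) + k < 2 * k - 1 then jmatEntry k (i + k) j else 0 := by
    simp only [M, J', addShiftedRows_mul_apply, submatrix_apply, Jmat_apply, Fin.val_castLE,
      dite_eq_ite]
  have hlower : M.IsLowerTriangular := fun i j (hij : (i : ℕ) < j) => by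
    rw [hM]
    exact jmatEntry_add_shift_of_lt hij j.isLt
  calc J'.det = M.det := by rw [det_mul, det_addShiftedRows hk, one_mul]
    _ = ∏ i : Fin (2 * k - 1), (if (i : ℕ) < k then (2 : ℤ) else -2) := by
      rw [det_of_isLowerTriangular M hlower]
      exact Finset.prod_congr rfl fun i _ => (hM i i).trans (jmatEntry_add_shift_self k i)
    _ = (-1) ^ (k - 1) * 2 ^ (2 * k - 1) := prod_ite_lt_two_neg_two k
end

section
/- Let K be a commutative ring, q ∈ K a unit, n ≥ 1, and let V be a free K-module with basis v_1,…,v_{2n}. Set i' = 2n+1−i, and define ρ_i = n−i for 1 ≤ i ≤ n and ρ_{i'} = −ρ_i. Define the K-linear map E : V ⊗ V → V ⊗ V by E(v_k ⊗ v_l) = δ_{k,l'} · Σ_{i=1}^{2n} q^{ρ_{i'} − ρ_k} v_i ⊗ v_{i'}. Then E ∘ E = ω₀ · E, where ω₀ = Σ_{i=1}^{2n} q^{2ρ_{i'}}. -/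
/-!
`E` has rank one: its matrix is `u vᵀ` with `u = ∑ᵢ q^{ρ_{i'}} vᵢ ⊗ v_{i'}` and
`v = ∑ₖ q^{-ρₖ} vₖ ⊗ v_{k'}`. Hence `E² = (v ⬝ u) E`, and
`v ⬝ u = ∑ᵢ q^{ρ_{i'} - ρᵢ} = ∑ᵢ q^{2ρ_{i'}}` because `ρ_{i'} = -ρᵢ`.
-/

namespace Matrix

theorem vecMulVec_mul_self {ι α : Type*} [Fintype ι] [CommSemiring α] (u v : ι → α) :
    vecMulVec u v * vecMulVec u v = (v ⬝ᵥ u) • vecMulVec u v := by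
  rw [vecMulVec_mul_vecMulVec, vecMulVec_smul]

theorem mulVecLin_vecMulVec_comp_self {ι R : Type*} [Fintype ι] [CommSemiring R]
    (u v : ι → R) :
    (vecMulVec u v).mulVecLin.comp (vecMulVec u v).mulVecLin =
      (v ⬝ᵥ u) • (vecMulVec u v).mulVecLin := by
  rw [← mulVecLin_mul, vecMulVec_mul_self]
  ext
  simp

end Matrix

/-- The vector `∑ᵢ f i • eᵢ ⊗ e_{σ i}`, written on the product basis. -/
def pairingVec {ι R : Type*} [DecidableEq ι] [Zero R] (σ : ι → ι) (f : ι → R) : ι × ι → R :=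
  fun p => if p.2 = σ p.1 then f p.1 else 0

theorem pairingVec_dotProduct_pairingVec {ι R : Type*} [Fintype ι] [DecidableEq ι]
    [CommSemiring R] (σ : ι → ι) (f g : ι → R) :
    pairingVec σ f ⬝ᵥ pairingVec σ g = ∑ i, f i * g i := by
  simp [dotProduct, Fintype.sum_prod_type, pairingVec]

/-- The weight `ρ` of type `D_n`, with `0`-based indices. -/
def typeDRho (n : ℕ) (i : Fin (2 * n)) : ℤ :=
  if (i : ℕ) < n then (n : ℤ) - (i : ℕ) - 1 else (n : ℤ) - (i : ℕ)

theorem typeDRho_rev {n : ℕ} (i : Fin (2 * n)) : typeDRho n i.rev = -typeDRho n i := by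
  have := i.isLt
  rw [typeDRho, typeDRho, Fin.val_rev]
  split_ifs <;> omega

/-- Let `K` be a commutative ring, `q ∈ K` a unit, and `V` free on `v_1, …, v_{2n}`.
With `i' = 2n+1-i`, `ρ_i = n - i` for `1 ≤ i ≤ n` and `ρ_{i'} = -ρ_i`, the linear
endomorphism `E` of `V ⊗ V` defined by
`E(v_k ⊗ v_l) = δ_{k,l'} · Σ_i q^{ρ_{i'} - ρ_k} v_i ⊗ v_{i'}`
satisfies `E ∘ E = ω₀ · E`, where `ω₀ = Σ_i q^{2ρ_{i'}}`.
(Here `V ⊗ V` is modelled as the free module on the product basis, indexed by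
pairs, with all indices `0`-based: `i' = 2n-1-i`.) -/
theorem contraction_squared (n : ℕ) (K : Type*) [CommRing K] (q : Kˣ) :
    let dual : Fin (2 * n) → Fin (2 * n) := fun i => ⟨2 * n - 1 - i.val, by omega⟩
    let ρ : Fin (2 * n) → ℤ := fun i =>
      if (i : ℕ) < n then (n : ℤ) - (i : ℕ) - 1 else (n : ℤ) - (i : ℕ)
    let M : Matrix (Fin (2 * n) × Fin (2 * n)) (Fin (2 * n) × Fin (2 * n)) K :=
      Matrix.of fun p c =>
        if c.1 = dual c.2 ∧ p.2 = dual p.1 then ((q ^ (ρ (dual p.1) - ρ c.1) : Kˣ) : K) else 0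
    let ω₀ : K := ∑ i : Fin (2 * n), ((q ^ (2 * ρ (dual i)) : Kˣ) : K)
    M.mulVecLin.comp M.mulVecLin = ω₀ • M.mulVecLin := by
  intro dual ρ M ω₀
  have hdual : dual = Fin.rev := funext fun i => Fin.ext (by simp only [dual, Fin.val_rev]; omega)
  have hρ : ρ = typeDRho n := rfl
  set u := pairingVec Fin.rev fun i => ((q ^ ρ i.rev : Kˣ) : K)
  set v := pairingVec Fin.rev fun i => ((q ^ (-ρ i) : Kˣ) : K)
  have hM : M = Matrix.vecMulVec u v := by
    ext ⟨a, b⟩ ⟨c, d⟩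
    have hcd : c = d.rev ↔ d = c.rev := by rw [eq_comm, Fin.rev_eq_iff]
    simp only [M, u, v, hdual, Matrix.of_apply, Matrix.vecMulVec_apply, pairingVec,
      ite_zero_mul_ite_zero, hcd, and_comm, ← Units.val_mul, ← zpow_add, sub_eq_add_neg]
  have hω : ω₀ = v ⬝ᵥ u := by
    rw [pairingVec_dotProduct_pairingVec]
    refine Finset.sum_congr rfl fun i _ => ?_
    rw [← Units.val_mul, ← zpow_add, hdual, hρ, typeDRho_rev]
    ring_nf
  rw [hM, hω]
  exact Matrix.mulVecLin_vecMulVec_comp_self u v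
end

section
/- Let F be a field, q ∈ F with q ≠ 0, and z = q − q^{-1}. Let A be an associative F-algebra containing elements A_t for j ≤ t ≤ n and B_{s,t} for j ≤ s < t ≤ n (where 1 ≤ j < n are fixed integers), satisfying: (i) B_{s,u}B_{u,t} − q^{-1}B_{u,t}B_{s,u} = −q^{-1}B_{s,t} whenever j ≤ s < u < t ≤ n; (ii) A_{t+1}B_{t,t+1} − q^{-1}B_{t,t+1}A_{t+1} = −q^{-1}A_t for j ≤ t < n; (iii) A_k B_{j,k−1} = B_{j,k−1}A_k for j+1 < k ≤ n. Then for all k with j < k ≤ n: A_k B_{j,k} − q^{-1} B_{j,k} A_k = (−q)^{j−k} A_j − z · Σ_{t=j+1}^{k−1} (−q)^{t−k} B_{j,t} A_t. -/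
/-!
Write `C m = X m * B j m - q⁻¹ • (B j m * X m)`. Relation (i) gives
`B j (m + 1) = -q • (B j m * B m (m + 1)) + B m (m + 1) * B j m`; moving `X (m + 1)` through this
with (iii) and (ii) yields `C (m + 1) = B j m * X m - q⁻¹ • (X m * B j m)`, i.e. the first-order
linear recurrence `C (m + 1) = (-q)⁻¹ • (C m - (q - q⁻¹) • (B j m * X m))`. Unrolling it from
`C (j + 1) = (-q)⁻¹ • X j`, which is (ii), gives the formula.
-/

open Finset

section Recurrence

variable {K M : Type*} [DivisionRing K] [AddCommGroup M] [Module K M]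

theorem eq_zpow_smul_add_sum_of_succ_eq_inv_smul {c : K} (hc : c ≠ 0) (x : M) (u v : ℕ → M)
    (j n : ℕ) (hbase : u (j + 1) = c⁻¹ • x)
    (hstep : ∀ m, j < m → m < n → u (m + 1) = c⁻¹ • (u m + v m)) :
    ∀ m, j < m → m ≤ n →
      u m = c ^ ((j : ℤ) - m) • x + ∑ t ∈ Ioo j m, c ^ ((t : ℤ) - m) • v t := by
  intro m hjm
  induction m, hjm using Nat.le_induction with
  | base =>
    intro _
    have hexp : (j : ℤ) - (j + 1 : ℕ) = -1 := by push_cast; ring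
    rw [Nat.succ_eq_add_one, hbase, hexp, zpow_neg_one, Ioo_add_one_right_eq_Ioc, Ioc_self,
      sum_empty, add_zero]
  | succ m hjm ih =>
    intro hmn
    have hpow : ∀ t : ℕ, c ^ ((t : ℤ) - (m + 1 : ℕ)) = c⁻¹ * c ^ ((t : ℤ) - m) := fun t => by
      rw [← zpow_neg_one, ← zpow_add₀ hc]
      congr 1
      push_cast
      ring
    rw [hstep m hjm hmn, ih (Nat.le_of_succ_le hmn), Ioo_add_one_right_eq_Ioc,
      ← Ioo_insert_right hjm, sum_insert right_notMem_Ioo]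
    simp only [hpow, mul_smul, sub_self, zpow_zero, one_smul, ← smul_sum, smul_add]
    abel

end Recurrence

section QCommutator

variable {F A : Type*} [Field F] [Ring A] [Algebra F A]

def qCommutator (q : F) (a b : A) : A := a * b - q⁻¹ • (b * a)

theorem qCommutator_eq_qCommutator_of_commute {q : F} (hq : q ≠ 0) {a b c x y : A}
    (hab : qCommutator q a b = (-q⁻¹) • c) (hyb : qCommutator q y b = (-q⁻¹) • x)
    (hya : Commute y a) : qCommutator q y c = qCommutator q a x := by
  have hc : c = (-q) • (a * b) + b * a := by
    calc c = (-q) • ((-q⁻¹) • c) := by rw [smul_smul, neg_mul_neg, mul_inv_cancel₀ hq, one_smul]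
      _ = _ := by rw [← hab, qCommutator, smul_sub, smul_smul, neg_mul, mul_inv_cancel₀ hq,
        neg_one_smul, sub_neg_eq_add]
  have hyb' : y * b = (-q⁻¹) • x + q⁻¹ • (b * y) := sub_eq_iff_eq_add.mp hyb
  have hyab : y * (a * b) = a * (y * b) := by rw [← mul_assoc, hya.eq, mul_assoc]
  calc qCommutator q y c
      = (-q) • (a * (y * b)) + y * b * a - q⁻¹ • ((-q) • (a * (b * y)) + b * (a * y)) := by
        simp only [qCommutator, hc, mul_add, add_mul, mul_smul_comm, smul_mul_assoc, mul_assoc,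
          hyab]
    _ = qCommutator q a x := by
        simp only [hyb', qCommutator, mul_add, add_mul, mul_smul_comm, smul_mul_assoc, mul_assoc,
          hya.eq]
        match_scalars <;> field_simp <;> ring

theorem qCommutator_eq_inv_smul_qCommutator_swap (q : F) (hq : q ≠ 0) (a x : A) :
    qCommutator q a x = (-q)⁻¹ • (qCommutator q x a - (q - q⁻¹) • (a * x)) := by
  rw [qCommutator, qCommutator]
  match_scalars
  · field_simp
    ring
  · field_simp

end QCommutator

theorem qcommutator_formula_general {F : Type*} [Field F] (q : F) (hq : q ≠ 0)
    {A : Type*} [Ring A] [Algebra F A]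
    (n j : ℕ)
    (X : ℕ → A) (B : ℕ → ℕ → A)
    (h1 : ∀ s u t, j ≤ s → s < u → u < t → t ≤ n →
      B s u * B u t - q⁻¹ • (B u t * B s u) = (-q⁻¹) • B s t)
    (h2 : ∀ t, j ≤ t → t < n →
      X (t + 1) * B t (t + 1) - q⁻¹ • (B t (t + 1) * X (t + 1)) = (-q⁻¹) • X t)
    (h3 : ∀ m, j + 1 < m → m ≤ n → X m * B j (m - 1) = B j (m - 1) * X m) :
    ∀ m, j < m → m ≤ n →
      X m * B j m - q⁻¹ • (B j m * X m) =
        ((-q) ^ ((j : ℤ) - (m : ℤ))) • X j -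
          (q - q⁻¹) • ∑ t ∈ Finset.Ioo j m, ((-q) ^ ((t : ℤ) - (m : ℤ))) • (B j t * X t) := by
  intro m hjm hmn
  have hstep : ∀ m, j < m → m < n →
      qCommutator q (X (m + 1)) (B j (m + 1)) =
        (-q)⁻¹ • (qCommutator q (X m) (B j m) + -((q - q⁻¹) • (B j m * X m))) := by
    intro m hjm hmn
    have hcomm : X (m + 1) * B j m = B j m * X (m + 1) := by simpa using h3 (m + 1) (by omega) hmn
    rw [qCommutator_eq_qCommutator_of_commute hq (h1 j m (m + 1) le_rfl hjm (by omega) hmn)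
      (h2 m (by omega) hmn) hcomm, qCommutator_eq_inv_smul_qCommutator_swap q hq, sub_eq_add_neg]
  have hbase : qCommutator q (X (j + 1)) (B j (j + 1)) = (-q)⁻¹ • X j := by
    rw [inv_neg]
    exact h2 j le_rfl (by omega)
  refine (eq_zpow_smul_add_sum_of_succ_eq_inv_smul (neg_ne_zero.mpr hq) (X j)
    (fun m => qCommutator q (X m) (B j m)) (fun m => -((q - q⁻¹) • (B j m * X m))) j n hbase
    hstep m hjm hmn).trans ?_
  simp_rw [smul_neg, sum_neg_distrib, ← sub_eq_add_neg, smul_sum, smul_comm (q - q⁻¹)]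

/-- Abstract form of the `q`-commutator formula for quantum-group root vectors
(`X t` plays the role of `x⁻_{ε_i+ε_t}` and `B s t` of `x⁻_{ε_s-ε_t}`):
given the relations (i)-(iii), for all `j < m ≤ n`,
`X m · B j m - q⁻¹ (B j m · X m)
  = (-q)^{j-m} X j - (q - q⁻¹) Σ_{t=j+1}^{m-1} (-q)^{t-m} B j t · X t`. -/
theorem qcommutator_formula {F : Type*} [Field F] (q : F) (hq : q ≠ 0)
    {A : Type*} [Ring A] [Algebra F A]
    (n j : ℕ) (hj : 1 ≤ j) (hjn : j < n)
    (X : ℕ → A) (B : ℕ → ℕ → A)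
    (h1 : ∀ s u t, j ≤ s → s < u → u < t → t ≤ n →
      B s u * B u t - q⁻¹ • (B u t * B s u) = (-q⁻¹) • B s t)
    (h2 : ∀ t, j ≤ t → t < n →
      X (t + 1) * B t (t + 1) - q⁻¹ • (B t (t + 1) * X (t + 1)) = (-q⁻¹) • X t)
    (h3 : ∀ m, j + 1 < m → m ≤ n → X m * B j (m - 1) = B j (m - 1) * X m) :
    ∀ m, j < m → m ≤ n →
      X m * B j m - q⁻¹ • (B j m * X m) =
        ((-q) ^ ((j : ℤ) - (m : ℤ))) • X j -
          (q - q⁻¹) • ∑ t ∈ Finset.Ioo j m, ((-q) ^ ((t : ℤ) - (m : ℤ))) • (B j t * X t) :=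
  qcommutator_formula_general q hq n j X B h1 h2 h3
end
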